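/- Let φ be a solution of the normalized equation EQ_λ on (0,∞) such that φ(t) > 0 for all t ∈ (0,t₀] and t₀ ∈ (0,∞) is a local minimum point of φ. Then φ(t) > 0 for every t ∈ (0,∞). -/

import Mathlib

/-!
At the local minimum `t₀` we have `φ' t₀ = 0` and `φ'' t₀ ≥ 0`, so the equation forces
`0 < φ t₀ ≤ 1`, where the potential `λ (|x|^(q+1)/(q+1) - x²/2)` is negative. Hence the
energy is negative at `t₀`. The damping coefficient is nonnegative, so the energy is
nonincreasing; but at a zero of `φ` the energy equals `φ'²/2 ≥ 0`, so `φ` cannot vanish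
after `t₀`.
-/

open Real Set Filter Topology

theorem IsLocalMin.second_deriv_nonneg {f f' : ℝ → ℝ} {a b : ℝ} (hmin : IsLocalMin f a)
    (hf : ∀ᶠ x in 𝓝 a, HasDerivAt f (f' x) x) (hf' : HasDerivAt f' b a) : 0 ≤ b := by
  by_contra! hb
  have hfa : f' a = 0 := hmin.hasDerivAt_eq_zero hf.self_of_nhds
  have hneg : ∀ᶠ x in 𝓝[>] a, f' x < 0 := by
    filter_upwards [(hasDerivAt_iff_tendsto_slope.1 hf').eventually_lt_const hb
      |>.filter_mono (nhdsWithin_mono _ fun x hx => ne_of_gt hx), self_mem_nhdsWithin]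
      with x hslope hx
    rwa [slope_def_field, hfa, sub_zero, div_lt_iff₀ (sub_pos.2 hx), zero_mul] at hslope
  obtain ⟨u, hau, hsub⟩ := mem_nhdsGT_iff_exists_Ioo_subset.1
    ((hf.filter_mono nhdsWithin_le_nhds).and (hneg.and (hmin.filter_mono nhdsWithin_le_nhds)))
  have hderiv : ∀ x ∈ Ico a u, HasDerivAt f (f' x) x := fun x hx =>
    hx.1.eq_or_lt.elim (fun hxa => hxa ▸ hf.self_of_nhds) fun hxa => (hsub ⟨hxa, hx.2⟩).1
  have hm : (a + u) / 2 ∈ Ioo a u := by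
    constructor <;> linarith [mem_Ioi.1 hau]
  obtain ⟨c, hc, hslope⟩ := exists_hasDerivAt_eq_slope f f' hm.1
    (fun x hx => (hderiv x ⟨hx.1, hx.2.trans_lt hm.2⟩).continuousAt.continuousWithinAt)
    (fun x hx => hderiv x ⟨hx.1.le, hx.2.trans hm.2⟩)
  have hc_neg : f' c < 0 := (hsub ⟨hc.1, hc.2.trans hm.2⟩).2.1
  have hmin_m : f a ≤ f ((a + u) / 2) := (hsub hm).2.2
  rw [hslope, div_lt_iff₀ (sub_pos.2 hm.1), zero_mul] at hc_neg
  linarith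

theorem antitoneOn_damped_energy {V f c φ φ' φ'' : ℝ → ℝ} {s : Set ℝ}
    (hs : Convex ℝ s) (hV : ∀ x, HasDerivAt V (-f x) x)
    (hd1 : ∀ t ∈ s, HasDerivAt φ (φ' t) t) (hd2 : ∀ t ∈ s, HasDerivAt φ' (φ'' t) t)
    (hode : ∀ t ∈ s, φ'' t + c t * φ' t = f (φ t)) (hc : ∀ t ∈ s, 0 ≤ c t) :
    AntitoneOn (fun t => φ' t ^ 2 / 2 + V (φ t)) s := by
  have hE : ∀ t ∈ s, HasDerivAt (fun t => φ' t ^ 2 / 2 + V (φ t)) (-(c t * φ' t ^ 2)) t := by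
    intro t ht
    refine (((hd2 t ht).pow 2).div_const 2 |>.add ((hV (φ t)).comp t (hd1 t ht))).congr_deriv ?_
    rw [← hode t ht]
    push_cast
    ring
  refine antitoneOn_of_hasDerivWithinAt_nonpos hs
    (fun t ht => (hE t ht).continuousAt.continuousWithinAt)
    (fun t ht => (hE t (interior_subset ht)).hasDerivWithinAt) fun t ht => ?_
  exact neg_nonpos.2 (mul_nonneg (hc t (interior_subset ht)) (sq_nonneg _))

noncomputable def yamabePotential (lam q x : ℝ) : ℝ :=
  lam * (|x| ^ (q + 1) / (q + 1) - x ^ 2 / 2)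

theorem hasDerivAt_yamabePotential (lam : ℝ) {q : ℝ} (hq : 0 < q) (x : ℝ) :
    HasDerivAt (yamabePotential lam q) (-(lam * (x - |x| ^ (q - 1) * x))) x := by
  refine (((hasDerivAt_abs_rpow x (by linarith : 1 < q + 1)).div_const (q + 1)
    |>.sub ((hasDerivAt_pow 2 x).div_const 2)).const_mul lam).congr_deriv ?_
  rw [show q + 1 - 2 = q - 1 by ring]
  field_simp
  ring

theorem yamabePotential_zero (lam : ℝ) {q : ℝ} (hq : 0 < q) : yamabePotential lam q 0 = 0 := by
  simp [yamabePotential, zero_rpow (by linarith : q + 1 ≠ 0)]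

theorem yamabePotential_neg {lam q x : ℝ} (hlam : 0 < lam) (hq : 1 < q) (hx₀ : 0 < x)
    (hx₁ : x ≤ 1) : yamabePotential lam q x < 0 := by
  have hpow : x ^ (q + 1) ≤ x ^ 2 := by
    rw [← rpow_two]
    exact rpow_le_rpow_of_exponent_ge hx₀ hx₁ (by linarith)
  have hdiv : x ^ 2 / (q + 1) < x ^ 2 / 2 :=
    div_lt_div_of_pos_left (by positivity) two_pos (by linarith)
  have hdiv' : x ^ (q + 1) / (q + 1) ≤ x ^ 2 / (q + 1) := by gcongr
  rw [yamabePotential, abs_of_pos hx₀]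
  exact mul_neg_of_pos_of_neg hlam (by linarith)

theorem le_one_of_sub_abs_rpow_mul_nonneg {q x : ℝ} (hq : 1 < q) (hx : 0 < x)
    (h : 0 ≤ x - |x| ^ (q - 1) * x) : x ≤ 1 := by
  rw [abs_of_pos hx] at h
  have hpow : x ^ (q - 1) ≤ 1 := by nlinarith
  rcases (rpow_le_one_iff_of_pos hx).1 hpow with ⟨_, hq'⟩ | ⟨hx1, _⟩
  · linarith
  · exact hx1

theorem hyperbolic_damping_nonneg {n : ℕ} (hn : 1 ≤ n) {t : ℝ} (ht : 0 < t) :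
    0 ≤ ((n : ℝ) - 1) * ((exp (2 * t) + 1) / (exp (2 * t) - 1)) := by
  have hexp : 1 < exp (2 * t) := one_lt_exp_iff.2 (by linarith)
  have hn' : (1 : ℝ) ≤ n := by exact_mod_cast hn
  exact mul_nonneg (by linarith) (div_nonneg (by linarith) (by linarith))

/-- If a solution φ of the normalized equation EQ_λ is positive on (0,t₀] and t₀ > 0
is a local minimum point of φ, then φ stays positive on all of (0,∞). -/
theorem positive_after_local_min
    (n : ℕ) (hn : 2 ≤ n) (lam q : ℝ) (hlam : 0 < lam) (hq : 1 < q)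
    (φ φ' φ'' : ℝ → ℝ)
    (hd1 : ∀ t ∈ Ioi (0:ℝ), HasDerivAt φ (φ' t) t)
    (hd2 : ∀ t ∈ Ioi (0:ℝ), HasDerivAt φ' (φ'' t) t)
    (hode : ∀ t ∈ Ioi (0:ℝ),
      φ'' t + ((n : ℝ) - 1) * ((exp (2*t) + 1) / (exp (2*t) - 1)) * φ' t
        = lam * (φ t - |φ t| ^ (q - 1) * φ t))
    (t₀ : ℝ) (ht₀ : 0 < t₀)
    (hpos : ∀ t ∈ Ioc (0:ℝ) t₀, 0 < φ t)
    (hmin : IsLocalMin φ t₀) :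
    ∀ t ∈ Ioi (0:ℝ), 0 < φ t := by
  have hφt₀ : 0 < φ t₀ := hpos t₀ ⟨ht₀, le_rfl⟩
  have hφ't₀ : φ' t₀ = 0 := hmin.hasDerivAt_eq_zero (hd1 t₀ ht₀)
  have hφ''t₀ : 0 ≤ φ'' t₀ :=
    hmin.second_deriv_nonneg (eventually_of_mem (Ioi_mem_nhds ht₀) hd1) (hd2 t₀ ht₀)
  have hφt₀_le : φ t₀ ≤ 1 := by
    refine le_one_of_sub_abs_rpow_mul_nonneg hq hφt₀ (nonneg_of_mul_nonneg_right ?_ hlam)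
    simpa [← hode t₀ ht₀, hφ't₀] using hφ''t₀
  have hE := antitoneOn_damped_energy (convex_Ioi 0)
    (hasDerivAt_yamabePotential lam (by linarith)) hd1 hd2 hode
    fun t ht => hyperbolic_damping_nonneg (by omega) ht
  intro t ht
  rcases le_or_gt t t₀ with hle | hlt
  · exact hpos t ⟨ht, hle⟩
  by_contra! hφt
  obtain ⟨s, hs, hφs⟩ := intermediate_value_Icc' hlt.le
    (fun x hx => (hd1 x (ht₀.trans_le hx.1)).continuousAt.continuousWithinAt)
    ⟨hφt, hφt₀.le⟩
  have hEs := hE (mem_Ioi.2 ht₀) (ht₀.trans_le hs.1) hs.1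
  simp only [hφs, hφ't₀, yamabePotential_zero lam (by linarith : 0 < q)] at hEs
  nlinarith [yamabePotential_neg hlam hq hφt₀ hφt₀_le, sq_nonneg (φ' s)]
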